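/- Let f : ℝ → ℝ be C², A = [ga, gb], and ḡ ∈ A satisfy the first-order condition f'(ḡ)(g - ḡ) ≥ 0 for all g ∈ A, together with f''(ḡ) v² > 0 for all nonzero v in the critical cone C(ḡ). Then ḡ is a strict local minimizer of f on A: there exist ε > 0 and δ > 0 such that f(ḡ) + (δ/2)|g - ḡ|² ≤ f(g) for all g ∈ A with |g - ḡ| ≤ ε. -/

import Mathlib

/-!
If `f' ḡ ≠ 0`, the first-order condition makes `f` grow linearly along `A` near `ḡ`, which
dominates any quadratic. If `f' ḡ = 0`, every feasible direction `u - ḡ` lies in the critical cone,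
so either `A ⊆ {ḡ}` or `f'' ḡ > 0`; in the latter case the second derivative test applied to
`f - δ / 2 * (· - ḡ) ^ 2` with `δ = f'' ḡ / 2` gives quadratic growth.
-/

open Set Filter Topology

lemma eventually_linear_growth_of_hasDerivAt {f : ℝ → ℝ} {a x : ℝ} (hf : HasDerivAt f a x)
    (ha : a ≠ 0) : ∀ᶠ u in 𝓝 x, 0 ≤ a * (u - x) → f x + |a| / 2 * |u - x| ≤ f u := by
  have hlo := (hasDerivAt_iff_isLittleO.1 hf).def (c := |a| / 2) (half_pos (abs_pos.2 ha))
  filter_upwards [hlo] with u hu hdir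
  simp only [Real.norm_eq_abs, smul_eq_mul] at hu
  have hslope : a * (u - x) = |a| * |u - x| := by rw [← abs_mul, abs_of_nonneg hdir]
  linarith [(abs_le.1 hu).1]

lemma isLocalMin_sub_sq_of_deriv_eq_zero {f : ℝ → ℝ} {x δ : ℝ} (hf : Differentiable ℝ f)
    (hf' : DifferentiableAt ℝ (deriv f) x) (hcrit : deriv f x = 0)
    (hδ : δ < deriv (deriv f) x) :
    IsLocalMin (fun u => f u - δ / 2 * (u - x) ^ 2) x := by
  have hderiv : deriv (fun u => f u - δ / 2 * (u - x) ^ 2) = fun u => deriv f u - δ * (u - x) :=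
    funext fun u => ((hf u).hasDerivAt.sub
      ((((hasDerivAt_id' u).sub_const x).pow 2).const_mul (δ / 2))).congr_deriv (by push_cast; ring)
      |>.deriv
  have hderiv2 : deriv (fun u => deriv f u - δ * (u - x)) x = deriv (deriv f) x - δ :=
    ((hf'.hasDerivAt.sub (((hasDerivAt_id' x).sub_const x).const_mul δ)).congr_deriv (by ring)).deriv
  refine isLocalMin_of_deriv_deriv_pos ?_ ?_ ((hf x).continuousAt.sub (by fun_prop))
  · rw [hderiv, hderiv2]
    linarith
  · simp only [hderiv, hcrit, sub_self, mul_zero]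

theorem second_order_sufficient_condition_general (f : ℝ → ℝ) (ga gb g : ℝ)
    (hf : ContDiff ℝ 2 f)
    (hfirst : ∀ u ∈ Set.Icc ga gb, deriv f g * (u - g) ≥ 0)
    (hsecond : ∀ v : ℝ, v ≠ 0 → (g = ga → 0 ≤ v) → (g = gb → v ≤ 0) →
      (deriv f g ≠ 0 → v = 0) → deriv (deriv f) g * v ^ 2 > 0) :
    ∃ ε > 0, ∃ δ > 0, ∀ u ∈ Set.Icc ga gb, |u - g| ≤ ε →
      f g + δ / 2 * |u - g| ^ 2 ≤ f u := by
  suffices h : ∃ δ > 0, ∀ᶠ u in 𝓝 g, u ∈ Icc ga gb → f g + δ / 2 * |u - g| ^ 2 ≤ f u by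
    obtain ⟨δ, hδ, hev⟩ := h
    obtain ⟨ε, hε, hball⟩ := Metric.nhds_basis_closedBall.eventually_iff.1 hev
    exact ⟨ε, hε, δ, hδ, fun u hu hue => hball (by rwa [Metric.mem_closedBall, Real.dist_eq]) hu⟩
  have hf1 : Differentiable ℝ f := hf.differentiable (by norm_num)
  by_cases hcrit : deriv f g = 0
  · by_cases hcurv : 0 < deriv (deriv f) g
    · refine ⟨_, half_pos hcurv, ?_⟩
      filter_upwards [isLocalMin_sub_sq_of_deriv_eq_zero hf1 (hf.differentiable_deriv_two g)
        hcrit (half_lt_self hcurv)] with u hu _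
      rw [sq_abs]
      simp only [sub_self, zero_pow two_ne_zero, mul_zero, sub_zero] at hu
      linarith
    · refine ⟨1, one_pos, Eventually.of_forall fun u hu => ?_⟩
      obtain rfl : u = g := by
        by_contra hne
        exact hcurv <| pos_of_mul_pos_left (hsecond (u - g) (sub_ne_zero.2 hne)
          (fun h => by linarith [hu.1]) (fun h => by linarith [hu.2]) (absurd hcrit))
          (sq_nonneg _)
      simp
  · refine ⟨|deriv f g|, abs_pos.2 hcrit, ?_⟩
    filter_upwards [eventually_linear_growth_of_hasDerivAt (hf1 g).hasDerivAt hcrit,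
      Metric.ball_mem_nhds g one_pos] with u hlin hnear hu
    rw [Metric.mem_ball, Real.dist_eq] at hnear
    have hquad : |u - g| ^ 2 ≤ |u - g| := by nlinarith [abs_nonneg (u - g)]
    nlinarith [hlin (hfirst u hu), abs_nonneg (deriv f g)]

/-- Second-order sufficient condition: if `ḡ ∈ [ga, gb]` satisfies the
first-order condition `f'(ḡ)(g − ḡ) ≥ 0` on `A = [ga, gb]` and
`f''(ḡ) v² > 0` for all nonzero `v` in the critical cone, then `ḡ` is a strict
local minimizer with quadratic growth. -/
theorem second_order_sufficient_condition (f : ℝ → ℝ) (ga gb g : ℝ)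
    (hab : ga ≤ gb) (hf : ContDiff ℝ 2 f) (hg : g ∈ Set.Icc ga gb)
    (hfirst : ∀ u ∈ Set.Icc ga gb, deriv f g * (u - g) ≥ 0)
    (hsecond : ∀ v : ℝ, v ≠ 0 → (g = ga → 0 ≤ v) → (g = gb → v ≤ 0) →
      (deriv f g ≠ 0 → v = 0) → deriv (deriv f) g * v ^ 2 > 0) :
    ∃ ε > 0, ∃ δ > 0, ∀ u ∈ Set.Icc ga gb, |u - g| ≤ ε →
      f g + δ / 2 * |u - g| ^ 2 ≤ f u :=
  second_order_sufficient_condition_general f ga gb g hf hfirst hsecond
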